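/- If the value function approximation V̄_{t+1} satisfies |V̄_{t+1}(s) − V_{t+1}(s)| ≤ ε for all states s and all t, then the greedy policy with respect to V̄ incurs expected total cost at most V_0(S_0) + 2(T+1)ε, i.e., the VFA policy's suboptimality is bounded by 2(T+1)ε. -/
import Mathlib


/-- If a value function approximation is within ε of the exact value function everywhere,
then the greedy policy with respect to the approximation is within 2(T+1)ε of optimal. -/
theorem stmt_6 {S X W : Type*} [Fintype S] [Fintype X] [Nonempty X] [Fintype W]
    (T : ℕ) (C : ℕ → S → X → ℝ) (SM : S → X → W → S)
    (p : W → ℝ) (hp : ∀ w, 0 ≤ p w) (hpsum : ∑ w : W, p w = 1)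
    (V Vbar : ℕ → S → ℝ)
    (hVend : ∀ s, V (T + 1) s = 0)
    (hVrec : ∀ t ≤ T, ∀ s, V t s =
      ⨅ x : X, (C t s x + ∑ w : W, p w * V (t + 1) (SM s x w)))
    (ε : ℝ)
    (happrox : ∀ t ≤ T + 1, ∀ s, |Vbar t s - V t s| ≤ ε)
    (g : ℕ → S → X)
    (hg : ∀ t ≤ T, ∀ s, ∀ x : X,
      C t s (g t s) + ∑ w : W, p w * Vbar (t + 1) (SM s (g t s) w) ≤
        C t s x + ∑ w : W, p w * Vbar (t + 1) (SM s x w))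
    (Jfrom : (ℕ → S → X) → ℕ → S → ℝ)
    (hJend : ∀ π s, Jfrom π (T + 1) s = 0)
    (hJrec : ∀ π, ∀ t ≤ T, ∀ s, Jfrom π t s =
      C t s (π t s) + ∑ w : W, p w * Jfrom π (t + 1) (SM s (π t s) w))
    (s0 : S) :
    Jfrom g 0 s0 ≤ V 0 s0 + 2 * (T + 1) * ε := by
  have heps : (0:ℝ) ≤ ε := le_trans (abs_nonneg _) (happrox (T+1) le_rfl s0)
  -- pointwise sandwich
  have hVle : ∀ t ≤ T + 1, ∀ s, V t s ≤ Vbar t s + ε := by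
    intro t ht s
    have := (abs_le.mp (happrox t ht s)).1
    linarith
  have hVbarle : ∀ t ≤ T + 1, ∀ s, Vbar t s ≤ V t s + ε := by
    intro t ht s
    have := (abs_le.mp (happrox t ht s)).2
    linarith
  -- expected-value comparison under any action
  have hsum : ∀ (f h : S → ℝ) (c : ℝ), (∀ y, f y ≤ h y + c) → ∀ (x : X) (s : S),
      ∑ w : W, p w * f (SM s x w) ≤ (∑ w : W, p w * h (SM s x w)) + c := by
    intro f h c hfh x s
    have : ∑ w : W, p w * f (SM s x w) ≤ ∑ w : W, (p w * h (SM s x w) + p w * c) := by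
      apply Finset.sum_le_sum
      intro w _
      have := mul_le_mul_of_nonneg_left (hfh (SM s x w)) (hp w)
      linarith [this]
    calc ∑ w : W, p w * f (SM s x w) ≤ ∑ w : W, (p w * h (SM s x w) + p w * c) := this
      _ = (∑ w : W, p w * h (SM s x w)) + (∑ w : W, p w) * c := by
          rw [Finset.sum_add_distrib, Finset.sum_mul]
      _ = (∑ w : W, p w * h (SM s x w)) + c := by rw [hpsum, one_mul]
  -- the key one-step bound
  have hmid : ∀ t ≤ T, ∀ s,
      C t s (g t s) + ∑ w : W, p w * V (t + 1) (SM s (g t s) w) ≤ V t s + 2 * ε := by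
    intro t ht s
    have ht1 : t + 1 ≤ T + 1 := Nat.add_le_add_right ht 1
    have h1 : ∑ w : W, p w * V (t+1) (SM s (g t s) w)
        ≤ (∑ w : W, p w * Vbar (t+1) (SM s (g t s) w)) + ε :=
      hsum _ _ ε (fun y => hVle (t+1) ht1 y) (g t s) s
    have key : ∀ x : X,
        C t s (g t s) + ∑ w : W, p w * V (t+1) (SM s (g t s) w)
          ≤ (C t s x + ∑ w : W, p w * V (t+1) (SM s x w)) + 2 * ε := by
      intro x
      have h2 := hg t ht s x
      have h3 : ∑ w : W, p w * Vbar (t+1) (SM s x w)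
          ≤ (∑ w : W, p w * V (t+1) (SM s x w)) + ε :=
        hsum _ _ ε (fun y => hVbarle (t+1) ht1 y) x s
      linarith
    have : C t s (g t s) + (∑ w : W, p w * V (t+1) (SM s (g t s) w)) - 2 * ε
        ≤ ⨅ x : X, (C t s x + ∑ w : W, p w * V (t + 1) (SM s x w)) := by
      apply le_ciInf
      intro x
      linarith [key x]
    rw [hVrec t ht s]
    linarith
  -- downward induction
  have main : ∀ n : ℕ, ∀ t : ℕ, t + n = T + 1 → ∀ s : S,
      Jfrom g t s ≤ V t s + 2 * n * ε := by
    intro n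
    induction n with
    | zero =>
      intro t hte s
      simp only [Nat.add_zero] at hte
      subst hte
      rw [hJend, hVend]
      simp
    | succ n ih =>
      intro t hte s
      have ht : t ≤ T := by omega
      have h1 : (t + 1) + n = T + 1 := by omega
      rw [hJrec g t ht s]
      have h2 : ∑ w : W, p w * Jfrom g (t+1) (SM s (g t s) w)
          ≤ (∑ w : W, p w * V (t+1) (SM s (g t s) w)) + 2 * n * ε :=
        hsum _ _ (2 * n * ε) (fun y => ih (t+1) h1 y) (g t s) s
      have h3 := hmid t ht s
      have : ((n:ℝ) + 1) = ((n+1 : ℕ) : ℝ) := by push_cast; ring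
      calc C t s (g t s) + ∑ w : W, p w * Jfrom g (t+1) (SM s (g t s) w)
          ≤ C t s (g t s) + ((∑ w : W, p w * V (t+1) (SM s (g t s) w)) + 2 * n * ε) := by
            linarith
        _ ≤ V t s + 2 * ε + 2 * n * ε := by linarith
        _ = V t s + 2 * ((n:ℝ)+1) * ε := by ring
        _ = V t s + 2 * ((n+1:ℕ):ℝ) * ε := by push_cast; ring
  have := main (T+1) 0 (by omega) s0
  calc Jfrom g 0 s0 ≤ V 0 s0 + 2 * ((T+1:ℕ):ℝ) * ε := this
    _ = V 0 s0 + 2 * (T + 1) * ε := by push_cast; ring
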